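/- For the Kraus operators {A_k} of a channel N and the difference channel M = N − D, the quantity η² := Σ_{k,l} |Tr(A_k† A_l)|² − d_in/d_out equals Σ_{x,y=1}^{d_in} ‖M(|x⟩⟨y|)‖₂², and also equals d_in²·‖J_N − I/(d_in d_out)‖₂². -/

import Mathlib

/-!
Let `V` be the matrix whose `k`-th column is the vectorisation of `A k`, indexed by
(input, output) pairs. Then `V Vᴴ = d_in · J_N`, its `((x, a), (y, b))` entry is
`N(|x⟩⟨y|)_{ab}`, and `(Vᴴ V)_{kl} = Tr(A_kᴴ A_l)`. By cyclicity of the trace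
`‖V Vᴴ‖₂ = ‖Vᴴ V‖₂`, so both claimed expressions equal `‖V Vᴴ − I/d_out‖₂²`, which
expands to `∑_{k,l} |Tr(A_kᴴ A_l)|² − 2 d_in/d_out + d_in/d_out` because
`Tr(V Vᴴ) = Tr(∑_k A_kᴴ A_k) = d_in`.
-/

open Matrix BigOperators

/-- The channel with Kraus operators `A`. -/
noncomputable def krausMap {K din dout : ℕ} (A : Fin K → Matrix (Fin dout) (Fin din) ℂ)
    (ρ : Matrix (Fin din) (Fin din) ℂ) : Matrix (Fin dout) (Fin dout) ℂ :=
  ∑ k, A k * ρ * (A k)ᴴ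

/-- The difference `M = N − D` with the depolarizing channel. -/
noncomputable def diffMap {K din dout : ℕ} (A : Fin K → Matrix (Fin dout) (Fin din) ℂ)
    (ρ : Matrix (Fin din) (Fin din) ℂ) : Matrix (Fin dout) (Fin dout) ℂ :=
  krausMap A ρ - (ρ.trace * (dout : ℂ)⁻¹) • 1

/-- The Choi state `J_N` of `N`. -/
noncomputable def choi {K din dout : ℕ} (A : Fin K → Matrix (Fin dout) (Fin din) ℂ) :
    Matrix (Fin din × Fin dout) (Fin din × Fin dout) ℂ :=
  Matrix.of fun p q =>
    (din : ℂ)⁻¹ * (krausMap A (Matrix.single p.1 q.1 1)) p.2 q.2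

/-- The squared Hilbert–Schmidt norm `‖M‖₂² = Tr(Mᴴ M)`. -/
noncomputable def hsNormSq {n : Type*} [Fintype n] (M : Matrix n n ℂ) : ℝ :=
  ((Mᴴ * M).trace).re

section HilbertSchmidt

variable {m n : Type*} [Fintype m] [Fintype n]

lemma hsNormSq_eq_sum_normSq (M : Matrix n n ℂ) :
    hsNormSq M = ∑ i, ∑ j, Complex.normSq (M i j) := by
  rw [hsNormSq, Finset.sum_comm]
  simp [trace, mul_apply, Complex.normSq_apply]

lemma hsNormSq_smul (c : ℂ) (M : Matrix n n ℂ) :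
    hsNormSq (c • M) = Complex.normSq c * hsNormSq M := by
  simp only [hsNormSq_eq_sum_normSq, Matrix.smul_apply, smul_eq_mul, Complex.normSq_mul,
    Finset.mul_sum]

lemma hsNormSq_sub_smul_one [DecidableEq n] (M : Matrix n n ℂ) (c : ℝ) :
    hsNormSq (M - (c : ℂ) • 1) =
      hsNormSq M - 2 * c * M.trace.re + c ^ 2 * Fintype.card n := by
  have hexpand : (M - (c : ℂ) • 1)ᴴ * (M - (c : ℂ) • 1)
      = Mᴴ * M - (c : ℂ) • Mᴴ - (c : ℂ) • M + ((c : ℂ) ^ 2) • 1 := by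
    simp only [conjTranspose_sub, conjTranspose_smul, conjTranspose_one, Complex.star_def,
      Complex.conj_ofReal, sub_mul, mul_sub, Matrix.smul_mul, Matrix.mul_smul, Matrix.one_mul,
      Matrix.mul_one, smul_smul, sq]
    abel
  rw [hsNormSq, hexpand, hsNormSq]
  simp only [trace_add, trace_sub, trace_smul, trace_conjTranspose, trace_one, smul_eq_mul,
    Complex.add_re, Complex.sub_re, Complex.re_ofReal_mul, Complex.star_def, Complex.conj_re]
  norm_cast
  ring

lemma hsNormSq_mul_conjTranspose_self (B : Matrix m n ℂ) :
    hsNormSq (B * Bᴴ) = hsNormSq (Bᴴ * B) := by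
  simp only [hsNormSq, conjTranspose_mul, conjTranspose_conjTranspose]
  rw [Matrix.mul_assoc, trace_mul_comm]
  simp only [Matrix.mul_assoc]

end HilbertSchmidt

section Kraus

variable {ι m n : Type*} [Fintype ι] [Fintype m] [Fintype n]

def krausVec (A : ι → Matrix m n ℂ) : Matrix (n × m) ι ℂ :=
  of fun p k => A k p.2 p.1

omit [Fintype ι] in
lemma conjTranspose_krausVec_mul_self_apply (A : ι → Matrix m n ℂ) (k l : ι) :
    ((krausVec A)ᴴ * krausVec A) k l = ((A k)ᴴ * A l).trace := by
  simp [krausVec, mul_apply, trace, Fintype.sum_prod_type]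

lemma trace_krausVec_mul_conjTranspose [DecidableEq n] (A : ι → Matrix m n ℂ)
    (hA : ∑ k, (A k)ᴴ * A k = 1) :
    (krausVec A * (krausVec A)ᴴ).trace = Fintype.card n := by
  rw [trace_mul_comm, ← trace_one, ← hA, trace_sum]
  exact Finset.sum_congr rfl fun k _ => conjTranspose_krausVec_mul_self_apply A k k

lemma hsNormSq_krausVec_mul_conjTranspose_sub [DecidableEq n] [DecidableEq m]
    (A : ι → Matrix m n ℂ) (hA : ∑ k, (A k)ᴴ * A k = 1) :
    hsNormSq (krausVec A * (krausVec A)ᴴ - ((Fintype.card m : ℂ))⁻¹ • 1) =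
      (∑ k, ∑ l, ‖((A k)ᴴ * A l).trace‖ ^ 2) - Fintype.card n / Fintype.card m := by
  have hc : ((Fintype.card m : ℂ))⁻¹ = (((Fintype.card m : ℝ)⁻¹ : ℝ) : ℂ) := by
    push_cast; rfl
  rw [hc, hsNormSq_sub_smul_one, trace_krausVec_mul_conjTranspose A hA,
    hsNormSq_mul_conjTranspose_self, hsNormSq_eq_sum_normSq]
  simp only [conjTranspose_krausVec_mul_self_apply, Complex.sq_norm, Complex.natCast_re,
    Fintype.card_prod, Nat.cast_mul]
  set c : ℝ := (Fintype.card m : ℝ)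
  have hinv : c * c⁻¹ ^ 2 = c⁻¹ := by simpa [sq, mul_assoc] using inv_mul_mul_self c⁻¹
  rw [div_eq_mul_inv]
  linear_combination (Fintype.card n : ℝ) * hinv

end Kraus

section Channel

variable {K din dout : ℕ} (A : Fin K → Matrix (Fin dout) (Fin din) ℂ)

lemma krausMap_single_apply (x y : Fin din) (a b : Fin dout) :
    krausMap A (single x y 1) a b = (krausVec A * (krausVec A)ᴴ) (x, a) (y, b) := by
  simp [krausMap, krausVec, Matrix.sum_apply, mul_apply, single, ite_and]

lemma diffMap_single_apply (x y : Fin din) (a b : Fin dout) :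
    diffMap A (single x y 1) a b =
      (krausVec A * (krausVec A)ᴴ - ((dout : ℂ))⁻¹ • 1 : Matrix _ _ ℂ) (x, a) (y, b) := by
  rw [diffMap, Matrix.sub_apply, Matrix.sub_apply, krausMap_single_apply]
  rcases eq_or_ne x y with rfl | hxy
  · simp [one_apply, trace_single_eq_same]
  · simp [one_apply, trace_single_eq_of_ne _ _ _ hxy, hxy]

lemma choi_eq_smul : choi A = ((din : ℂ))⁻¹ • (krausVec A * (krausVec A)ᴴ) := by
  ext p q
  simp [choi, krausMap_single_apply]

lemma sum_hsNormSq_diffMap_single :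
    ∑ x, ∑ y, hsNormSq (diffMap A (single x y 1)) =
      hsNormSq (krausVec A * (krausVec A)ᴴ - ((dout : ℂ))⁻¹ • 1 : Matrix _ _ ℂ) := by
  simp only [hsNormSq_eq_sum_normSq, diffMap_single_apply, Fintype.sum_prod_type]
  exact Finset.sum_congr rfl fun x _ => Finset.sum_comm

lemma choi_sub_smul_one :
    choi A - ((((din : ℝ) * (dout : ℝ) : ℝ) : ℂ))⁻¹ • 1 =
      ((din : ℂ))⁻¹ • (krausVec A * (krausVec A)ᴴ - ((dout : ℂ))⁻¹ • 1) := by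
  rw [choi_eq_smul, smul_sub, smul_smul]
  push_cast
  rw [mul_inv]

end Channel

theorem stmt7_general {K din dout : ℕ} (hdin : 0 < din)
    (A : Fin K → Matrix (Fin dout) (Fin din) ℂ)
    (hA : ∑ k, (A k)ᴴ * A k = 1) :
    ((∑ k, ∑ l, ‖((A k)ᴴ * A l).trace‖ ^ 2) - (din : ℝ) / (dout : ℝ)
        = ∑ x : Fin din, ∑ y : Fin din,
            hsNormSq (diffMap A (Matrix.single x y 1)))
    ∧ ((∑ k, ∑ l, ‖((A k)ᴴ * A l).trace‖ ^ 2) - (din : ℝ) / (dout : ℝ)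
        = (din : ℝ) ^ 2 *
            hsNormSq (choi A - ((((din : ℝ) * (dout : ℝ) : ℝ) : ℂ))⁻¹ • 1)) := by
  have key := hsNormSq_krausVec_mul_conjTranspose_sub A hA
  simp only [Fintype.card_fin] at key
  refine ⟨by rw [sum_hsNormSq_diffMap_single, key], ?_⟩
  have hdin' : (din : ℝ) ≠ 0 := by positivity
  rw [choi_sub_smul_one, hsNormSq_smul, key, Complex.normSq_inv, Complex.normSq_natCast]
  field_simp

/-- The quantity `η² = ∑_{k,l} |Tr(Aₖᴴ Aₗ)|² − d_in/d_out` equals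
`∑_{x,y} ‖M(|x⟩⟨y|)‖₂²` and also equals `d_in²·‖J_N − I/(d_in d_out)‖₂²`. -/
theorem stmt7 {K din dout : ℕ} (hdin : 0 < din) (hdout : 0 < dout)
    (A : Fin K → Matrix (Fin dout) (Fin din) ℂ)
    (hA : ∑ k, (A k)ᴴ * A k = 1) :
    ((∑ k, ∑ l, ‖((A k)ᴴ * A l).trace‖ ^ 2) - (din : ℝ) / (dout : ℝ)
        = ∑ x : Fin din, ∑ y : Fin din,
            hsNormSq (diffMap A (Matrix.single x y 1)))
    ∧ ((∑ k, ∑ l, ‖((A k)ᴴ * A l).trace‖ ^ 2) - (din : ℝ) / (dout : ℝ)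
        = (din : ℝ) ^ 2 *
            hsNormSq (choi A - ((((din : ℝ) * (dout : ℝ) : ℝ) : ℂ))⁻¹ • 1)) :=
  stmt7_general hdin A hA
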